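/- arXiv:2601.01193 — 8 statements merged into one kernel-verified Lean document; each statement's English description precedes it below -/
import Mathlib

section
/- For n ≥ 3, the characteristic polynomial of the adjacency-diametrical matrix of the path P_n equals Φ_n(x) − (n−1)^2 Φ_{n−2}(x) + 2(1−n), where Φ_k(x) = ∏_{j=1}^{k} (x − 2cos(πj/(k+1))) is the characteristic polynomial of the adjacency matrix of the path P_k. -/
open Polynomial

/-- The adjacency-diametrical matrix of the path `Pₙ` with vertices `0,1,…,n-1` in path order:
entries `1` between consecutive vertices, `n-1` between the two end vertices, `0` otherwise. -/
def pathAD (n : ℕ) : Matrix (Fin n) (Fin n) ℝ := fun i j =>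
  if i.val + 1 = j.val ∨ j.val + 1 = i.val then 1
  else if (i.val = 0 ∧ j.val = n - 1) ∨ (j.val = 0 ∧ i.val = n - 1) then (n : ℝ) - 1
  else 0

/-- `Φ_k(x) = ∏_{j=1}^{k} (x − 2cos(πj/(k+1)))`, the characteristic polynomial of the
adjacency matrix of the path `P_k`. -/
noncomputable def pathPhi (k : ℕ) : Polynomial ℝ :=
  ∏ j ∈ Finset.range k, (X - C (2 * Real.cos (Real.pi * (j + 1) / (k + 1))))

/-!
The characteristic matrix `T = xI - A(Pₙ)` is tridiagonal, so expanding along the first row gives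
`det T = x Φₙ₋₁ - Φₙ₋₂`: `Φₙ` is the rescaled Chebyshev polynomial `Sₙ`, whose roots are the
numbers `2 cos(πj/(n+1))`. The characteristic matrix of `AD(Pₙ)` is `T` with `a = -(n-1)` added to
the two corner entries. Expanding its determinant multilinearly in the first and last rows gives
`det T`, two corner cofactors of `T` (triangular minors with diagonal `-1`, each contributing `a`),
and the determinant in which both rows are replaced by corner vectors, which is `-a² Φₙ₋₂`.
-/

namespace Polynomial.Chebyshev

theorem monic_and_natDegree_S_natCast (R : Type*) [CommRing R] [Nontrivial R] :
    ∀ n : ℕ, (S R n).Monic ∧ (S R n).natDegree = n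
  | 0 => by simp
  | 1 => by simp [monic_X]
  | n + 2 => by
    obtain ⟨hmon₁, hdeg₁⟩ := monic_and_natDegree_S_natCast R (n + 1)
    obtain ⟨-, hdeg₀⟩ := monic_and_natDegree_S_natCast R n
    have hmon : (X * S R (n + 1 : ℕ)).Monic := monic_X.mul hmon₁
    have hdeg : (X * S R (n + 1 : ℕ)).natDegree = n + 2 := by
      rw [natDegree_X_mul hmon₁.ne_zero, hdeg₁]
    have hlt : (S R n).natDegree < (X * S R (n + 1 : ℕ)).natDegree := by omega
    rw [show ((n + 2 : ℕ) : ℤ) = n + 2 by push_cast; ring, S_add_two, ← Nat.cast_one,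
      ← Nat.cast_add]
    exact ⟨hmon.sub_of_left (degree_lt_degree hlt),
      by rw [natDegree_sub_eq_left_of_natDegree_lt hlt, hdeg]⟩

open Real in
theorem isRoot_S_two_mul_real_cos {n k : ℕ} (hk : k < n) :
    (S ℝ n).IsRoot (2 * cos ((k + 1) * π / (n + 1))) := by
  have hsin : sin ((k + 1) * π / (n + 1)) ≠ 0 := by
    refine (sin_pos_of_pos_of_lt_pi (by positivity) ?_).ne'
    rw [div_lt_iff₀ (by positivity)]
    have : (k : ℝ) + 1 < n + 1 := by exact_mod_cast Nat.succ_lt_succ hk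
    nlinarith [pi_pos]
  have h := S_two_mul_real_cos ((k + 1) * π / (n + 1)) n
  rw [show ((n : ℤ) + 1 : ℝ) * ((k + 1) * π / (n + 1)) = (k + 1 : ℕ) * π by push_cast; field_simp,
    sin_nat_mul_pi] at h
  exact (mul_eq_zero.mp h).resolve_right hsin

end Polynomial.Chebyshev

theorem pathPhi_eq_S (k : ℕ) : pathPhi k = Chebyshev.S ℝ k := by
  set s := ((Multiset.range k).map fun j : ℕ => Real.cos ((j + 1) * Real.pi / (k + 1))).map (2 * ·)
  have hphi : pathPhi k = (s.map fun a => X - C a).prod := by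
    simp only [pathPhi, s, Multiset.map_map, Function.comp_def, mul_comm Real.pi]
    rfl
  obtain ⟨hmon, hdeg⟩ := Chebyshev.monic_and_natDegree_S_natCast ℝ k
  have hnodup : s.Nodup :=
    (Chebyshev.roots_U_real_nodup k).map fun _ _ h => mul_left_cancel₀ two_ne_zero h
  have hle : s ≤ (Chebyshev.S ℝ k).roots := by
    refine (Multiset.le_iff_subset hnodup).mpr fun x hx => ?_
    obtain ⟨j, hj, rfl⟩ : ∃ j < k, 2 * Real.cos ((j + 1) * Real.pi / (k + 1)) = x := by
      simpa [s] using hx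
    exact (mem_roots hmon.ne_zero).mpr (Chebyshev.isRoot_S_two_mul_real_cos hj)
  have hphimon : (pathPhi k).Monic := monic_prod_of_monic _ _ fun j _ => monic_X_sub_C _
  refine (eq_of_monic_of_dvd_of_natDegree_le hphimon hmon ?_ ?_).symm
  · rw [hphi]
    exact (Multiset.prod_X_sub_C_dvd_iff_le_roots hmon.ne_zero s).mpr hle
  · rw [hdeg, hphi, natDegree_multiset_prod_X_sub_C_eq_card]
    simp [s]

namespace Matrix

variable {R : Type*} [CommRing R]

theorem det_updateRow_single_fin_succ {n : ℕ} (A : Matrix (Fin (n + 1)) (Fin (n + 1)) R)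
    (i j : Fin (n + 1)) (a : R) :
    (A.updateRow i (Pi.single j a)).det =
      (-1) ^ (i + j : ℕ) * a * (A.submatrix i.succAbove j.succAbove).det := by
  rw [det_succ_row _ i, Fintype.sum_eq_single j fun k hk => by simp [Pi.single_eq_of_ne hk]]
  simp only [updateRow_self, submatrix_updateRow_succAbove, Pi.single_eq_same]

theorem det_updateCol_single_fin_succ {n : ℕ} (A : Matrix (Fin (n + 1)) (Fin (n + 1)) R)
    (i j : Fin (n + 1)) (a : R) :
    (A.updateCol j (Pi.single i a)).det =
      (-1) ^ (i + j : ℕ) * a * (A.submatrix i.succAbove j.succAbove).det := by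
  rw [← det_transpose, ← updateRow_transpose, det_updateRow_single_fin_succ, ← det_transpose,
    transpose_submatrix, transpose_transpose, add_comm (j : ℕ)]

theorem det_updateRow_add_updateRow_add {n : Type*} [Fintype n] [DecidableEq n]
    (A : Matrix n n R) {i j : n} (hij : i ≠ j) (u v : n → R) :
    ((A.updateRow i (A i + u)).updateRow j (A j + v)).det =
      A.det + (A.updateRow i u).det + (A.updateRow j v).det +
        ((A.updateRow i u).updateRow j v).det := by
  have hi : (A.updateRow j v).updateRow i (A i) = A.updateRow j v := by
    conv_lhs => rw [← updateRow_ne (M := A) (b := v) hij]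
    exact updateRow_eq_self _ _
  have hj : ∀ w, (A.updateRow i w).updateRow j (A j) = A.updateRow i w := fun w => by
    conv_lhs => rw [← updateRow_ne (M := A) (b := w) hij.symm]
    exact updateRow_eq_self _ _
  rw [det_updateRow_add, hj, det_updateRow_add, updateRow_eq_self, updateRow_comm _ hij,
    det_updateRow_add, hi, updateRow_comm _ hij.symm]
  ring

end Matrix

namespace SimpleGraph

open Matrix Polynomial.Chebyshev

instance (n : ℕ) : DecidableRel (pathGraph n).Adj :=
  fun _ _ => decidable_of_iff _ pathGraph_adj.symm

variable {R : Type*} [CommRing R]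

theorem charmatrix_adjMatrix_pathGraph_apply {n : ℕ} (i j : Fin n) :
    charmatrix ((pathGraph n).adjMatrix R) i j =
      if i = j then X else if (i : ℕ) + 1 = j ∨ (j : ℕ) + 1 = i then -1 else 0 := by
  by_cases h : i = j
  · subst h
    simp
  · simp [adjMatrix_apply, pathGraph_adj, h, apply_ite C, apply_ite (fun x : R[X] => -x)]

theorem submatrix_charmatrix_adjMatrix_pathGraph {k n : ℕ} (s : ℕ) {f g : Fin k → Fin n}
    (hf : ∀ i, (f i : ℕ) = i + s) (hg : ∀ i, (g i : ℕ) = i + s) :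
    (charmatrix ((pathGraph n).adjMatrix R)).submatrix f g =
      charmatrix ((pathGraph k).adjMatrix R) := by
  ext i j
  simp only [submatrix_apply, charmatrix_adjMatrix_pathGraph_apply, Fin.ext_iff, hf, hg]
  grind

theorem det_submatrix_succ_castSucc_charmatrix_adjMatrix_pathGraph (k : ℕ) :
    ((charmatrix ((pathGraph (k + 1)).adjMatrix R)).submatrix Fin.succ Fin.castSucc).det =
      (-1) ^ k := by
  rw [det_of_isUpperTriangular]
  · simp only [submatrix_apply, charmatrix_adjMatrix_pathGraph_apply, Fin.ext_iff, Fin.val_succ,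
      Fin.val_castSucc]
    simp
  · intro i j hji
    have : (j : ℕ) < i := hji
    simp only [submatrix_apply, charmatrix_adjMatrix_pathGraph_apply, Fin.ext_iff, Fin.val_succ,
      Fin.val_castSucc]
    grind

variable (R) in
theorem charpoly_adjMatrix_pathGraph : ∀ n : ℕ, ((pathGraph n).adjMatrix R).charpoly = S R n
  | 0 => by simp [charpoly]
  | 1 => by simp [charpoly, det_unique]
  | n + 2 => by
    rw [charpoly]
    set T := charmatrix ((pathGraph (n + 2)).adjMatrix R)
    have hrow : T 0 = Pi.single (0 : Fin (n + 2)) X + Pi.single 1 (-1) := by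
      ext j
      simp only [T, charmatrix_adjMatrix_pathGraph_apply, Pi.add_apply, Pi.single_apply,
        Fin.ext_iff, Fin.val_zero, Fin.val_one]
      grind
    have hminor : (T.submatrix Fin.succ (1 : Fin (n + 2)).succAbove).det = -S R n := by
      have hcol : T.submatrix Fin.succ (1 : Fin (n + 2)).succAbove =
          (T.submatrix Fin.succ (1 : Fin (n + 2)).succAbove).updateCol 0 (Pi.single 0 (-1)) := by
        refine (updateCol_eq_self _ _).symm.trans (congrArg _ ?_)
        funext i
        simp only [T, submatrix_apply, charmatrix_adjMatrix_pathGraph_apply, Pi.single_apply,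
          Fin.one_succAbove_zero, Fin.ext_iff, Fin.val_succ, Fin.val_zero]
        grind
      rw [hcol, det_updateCol_single_fin_succ, Fin.succAbove_zero, submatrix_submatrix,
        submatrix_charmatrix_adjMatrix_pathGraph 2 (fun _ => rfl) (fun _ => by simp),
        ← charpoly, charpoly_adjMatrix_pathGraph n]
      simp
    rw [← updateRow_eq_self T 0, hrow, det_updateRow_add, det_updateRow_single_fin_succ,
      det_updateRow_single_fin_succ, Fin.succAbove_zero, hminor,
      submatrix_charmatrix_adjMatrix_pathGraph 1 (fun _ => rfl) (fun _ => rfl),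
      ← charpoly, charpoly_adjMatrix_pathGraph (n + 1),
      show ((n + 2 : ℕ) : ℤ) = n + 2 by push_cast; ring, S_add_two]
    simp [sub_eq_add_neg]

theorem det_updateRow_zero_single_last_charmatrix_adjMatrix_pathGraph (k : ℕ) (a : R[X]) :
    ((charmatrix ((pathGraph (k + 1)).adjMatrix R)).updateRow 0 (Pi.single (Fin.last k) a)).det
      = a := by
  rw [det_updateRow_single_fin_succ, Fin.succAbove_zero, Fin.succAbove_last,
    det_submatrix_succ_castSucc_charmatrix_adjMatrix_pathGraph, Fin.val_zero, Fin.val_last]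
  linear_combination a * (Even.neg_one_pow ⟨k, rfl⟩ : (-1 : R[X]) ^ (k + k) = 1)

theorem det_updateRow_last_single_zero_charmatrix_adjMatrix_pathGraph (k : ℕ) (a : R[X]) :
    ((charmatrix ((pathGraph (k + 1)).adjMatrix R)).updateRow (Fin.last k) (Pi.single 0 a)).det
      = a := by
  rw [← det_transpose, ← updateCol_transpose, ← charmatrix_transpose, transpose_adjMatrix,
    det_updateCol_single_fin_succ, Fin.succAbove_zero, Fin.succAbove_last,
    det_submatrix_succ_castSucc_charmatrix_adjMatrix_pathGraph, Fin.val_zero, Fin.val_last]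
  linear_combination a * (Even.neg_one_pow ⟨k, rfl⟩ : (-1 : R[X]) ^ (k + k) = 1)

theorem det_updateRow_updateRow_single_charmatrix_adjMatrix_pathGraph (k : ℕ) (a b : R[X]) :
    (((charmatrix ((pathGraph (k + 2)).adjMatrix R)).updateRow 0
        (Pi.single (Fin.last (k + 1)) a)).updateRow (Fin.last (k + 1)) (Pi.single 0 b)).det =
      -(a * b) * S R k := by
  set T := charmatrix ((pathGraph (k + 2)).adjMatrix R)
  have hminor : (T.updateRow 0 (Pi.single (Fin.last (k + 1)) a)).submatrix Fin.castSucc Fin.succ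
      = (T.submatrix Fin.castSucc Fin.succ).updateRow 0 (Pi.single (Fin.last k) a) := by
    ext i j
    rcases eq_or_ne i 0 with rfl | hi
    · simp [Pi.single_apply, Fin.ext_iff]
    · simp [updateRow_ne hi, updateRow_ne (Fin.castSucc_ne_zero_iff.mpr hi)]
  rw [det_updateRow_single_fin_succ, Fin.succAbove_last, Fin.succAbove_zero, hminor,
    det_updateRow_single_fin_succ, Fin.succAbove_zero, Fin.succAbove_last, submatrix_submatrix,
    submatrix_charmatrix_adjMatrix_pathGraph 1 (fun _ => rfl) (fun _ => rfl), ← charpoly,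
    charpoly_adjMatrix_pathGraph]
  simp only [Fin.val_last, Fin.val_zero, add_zero, zero_add]
  linear_combination (-(a * b) * S R k) * (Even.neg_one_pow ⟨k, rfl⟩ : (-1 : R[X]) ^ (k + k) = 1)

theorem det_charmatrix_adjMatrix_pathGraph_add_corners (k : ℕ) (a : R[X]) :
    (((charmatrix ((pathGraph (k + 2)).adjMatrix R)).updateRow 0
        (charmatrix ((pathGraph (k + 2)).adjMatrix R) 0 + Pi.single (Fin.last (k + 1)) a)).updateRow
        (Fin.last (k + 1))
        (charmatrix ((pathGraph (k + 2)).adjMatrix R) (Fin.last (k + 1)) + Pi.single 0 a)).det =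
      S R (k + 2 : ℕ) + 2 * a - a ^ 2 * S R k := by
  rw [det_updateRow_add_updateRow_add _ Fin.last_pos.ne, ← charpoly, charpoly_adjMatrix_pathGraph,
    det_updateRow_zero_single_last_charmatrix_adjMatrix_pathGraph,
    det_updateRow_last_single_zero_charmatrix_adjMatrix_pathGraph,
    det_updateRow_updateRow_single_charmatrix_adjMatrix_pathGraph]
  ring

end SimpleGraph

open Matrix SimpleGraph in
theorem charmatrix_pathAD {k : ℕ} (hk : 1 ≤ k) :
    charmatrix (pathAD (k + 2)) =
      ((charmatrix ((pathGraph (k + 2)).adjMatrix ℝ)).updateRow 0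
        (charmatrix ((pathGraph (k + 2)).adjMatrix ℝ) 0 +
          Pi.single (Fin.last (k + 1)) (-C (((k + 2 : ℕ) : ℝ) - 1)))).updateRow (Fin.last (k + 1))
        (charmatrix ((pathGraph (k + 2)).adjMatrix ℝ) (Fin.last (k + 1)) +
          Pi.single 0 (-C (((k + 2 : ℕ) : ℝ) - 1))) := by
  ext1 i j
  rw [charmatrix_apply]
  simp only [updateRow_apply, Pi.add_apply, Pi.single_apply, charmatrix_adjMatrix_pathGraph_apply,
    diagonal_apply, pathAD, Fin.ext_iff, Fin.val_zero, Fin.val_last]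
  split_ifs <;> first | (exfalso; grind) | simp

theorem charpoly_pathAD (n : ℕ) (hn : 3 ≤ n) :
    (pathAD n).charpoly =
      pathPhi n - C (((n : ℝ) - 1) ^ 2) * pathPhi (n - 2) + C (2 * (1 - (n : ℝ))) := by
  obtain ⟨k, rfl⟩ : ∃ k, n = k + 2 := ⟨n - 2, by omega⟩
  rw [Matrix.charpoly, charmatrix_pathAD (by omega),
    SimpleGraph.det_charmatrix_adjMatrix_pathGraph_add_corners, pathPhi_eq_S, pathPhi_eq_S,
    Nat.add_sub_cancel]
  simp only [map_pow, map_mul, map_sub, map_one, map_ofNat]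
  ring
end

section
/- The characteristic polynomial of the adjacency-diametrical matrix of the double star S_{n1,n2} is x^{n1+n2−4}·(x^4 − (9n1n2 − 8n1 − 8n2 + 8)x^2 + 4(n1n2 − n1 − n2 + 1)). -/
/-!
An entry of `AD(S_{n₁,n₂})` depends only on the kinds of its two vertices (first center, pendant
vertex of the first center, second center, pendant vertex of the second center), so `AD = P Q`
with `P` the `(n₁ + n₂) × 4` indicator matrix of the kinds. Since
`charpoly (P Q) = X ^ (n₁ + n₂ - 4) * charpoly (Q P)`, it remains to expand the characteristic
polynomial of the `4 × 4` quotient matrix `Q P`: the matrix of entries between kinds, with its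
columns scaled by the class sizes `1, n₁ - 1, 1, n₂ - 1`.
-/

open Polynomial

/-- Vertex set of the double star `S_{n₁,n₂}`: the first component holds the first center and
the `n₁ - 1` pendant vertices attached to it, the second component likewise for `n₂`. -/
abbrev DoubleStarVerts (n₁ n₂ : ℕ) : Type :=
  (Fin 1 ⊕ Fin (n₁ - 1)) ⊕ (Fin 1 ⊕ Fin (n₂ - 1))

/-- The adjacency-diametrical matrix of the double star `S_{n₁,n₂}` (diameter `3`): entry `1`
between the two centers and between a center and its own pendant vertices, entry `3` between
pendant vertices attached to different centers, `0` otherwise. -/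
def doubleStarAD (n₁ n₂ : ℕ) :
    Matrix (DoubleStarVerts n₁ n₂) (DoubleStarVerts n₁ n₂) ℝ := fun a b =>
  match a, b with
  | .inl (.inl _), .inr (.inl _) => 1
  | .inr (.inl _), .inl (.inl _) => 1
  | .inl (.inl _), .inl (.inr _) => 1
  | .inl (.inr _), .inl (.inl _) => 1
  | .inr (.inl _), .inr (.inr _) => 1
  | .inr (.inr _), .inr (.inl _) => 1
  | .inl (.inr _), .inr (.inr _) => 3
  | .inr (.inr _), .inl (.inr _) => 3
  | _, _ => 0

open Matrix Finset

section PartitionMatrix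

variable {ι κ R : Type*} [DecidableEq κ]

def partitionMatrix [Zero R] [One R] (f : ι → κ) : Matrix ι κ R :=
  of fun i k => if f i = k then 1 else 0

variable [Fintype κ] [CommRing R]

theorem partitionMatrix_mul_submatrix (A : Matrix κ κ R) (f : ι → κ) :
    (partitionMatrix f : Matrix ι κ R) * A.submatrix id f = A.submatrix f f := by
  ext i j
  simp [partitionMatrix, Matrix.mul_apply]

variable [Fintype ι]

theorem submatrix_mul_partitionMatrix (A : Matrix κ κ R) (f : ι → κ) :
    A.submatrix id f * (partitionMatrix f : Matrix ι κ R) =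
      A * diagonal fun k => (#{i | f i = k} : R) := by
  ext k l
  have hterm (i : ι) :
      A k (f i) * (if f i = l then 1 else 0) = if f i = l then A k l else 0 := by
    split_ifs with h <;> simp [h]
  rw [mul_diagonal]
  simp [Matrix.mul_apply, partitionMatrix, hterm, sum_ite, mul_comm]

theorem charpoly_submatrix_self [DecidableEq ι] (A : Matrix κ κ R) (f : ι → κ)
    (h : Fintype.card κ ≤ Fintype.card ι) :
    (A.submatrix f f).charpoly =
      X ^ (Fintype.card ι - Fintype.card κ) *
        (A * diagonal fun k => (#{i | f i = k} : R)).charpoly := by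
  rw [← partitionMatrix_mul_submatrix, charpoly_mul_comm_of_le _ _ h,
    submatrix_mul_partitionMatrix]

end PartitionMatrix

def doubleStarQuotient {R : Type*} [CommRing R] (a b : R) : Matrix (Fin 4) (Fin 4) R :=
  !![0, a, 1, 0; 1, 0, 0, 3 * b; 1, 0, 0, b; 0, 3 * a, 1, 0]

theorem charpoly_doubleStarQuotient {R : Type*} [CommRing R] (a b : R) :
    (doubleStarQuotient a b).charpoly =
      X ^ 4 - C (9 * a * b + a + b + 1) * X ^ 2 + C (4 * a * b) := by
  simp [doubleStarQuotient, charpoly, charmatrix_apply, det_succ_row_zero, Fin.sum_univ_succ,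
    Fin.succAbove, map_ofNat C]
  ring

def doubleStarKind {n₁ n₂ : ℕ} : DoubleStarVerts n₁ n₂ → Fin 4
  | .inl (.inl _) => 0
  | .inl (.inr _) => 1
  | .inr (.inl _) => 2
  | .inr (.inr _) => 3

def doubleStarKindAD : Matrix (Fin 4) (Fin 4) ℝ :=
  !![0, 1, 1, 0; 1, 0, 0, 3; 1, 0, 0, 1; 0, 3, 1, 0]

theorem doubleStarAD_eq_submatrix (n₁ n₂ : ℕ) :
    doubleStarAD n₁ n₂ = doubleStarKindAD.submatrix doubleStarKind doubleStarKind := by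
  ext ((v | v) | (v | v)) ((w | w) | (w | w)) <;> rfl

theorem card_doubleStarKind_eq (n₁ n₂ : ℕ) (k : Fin 4) :
    #{v : DoubleStarVerts n₁ n₂ | doubleStarKind v = k} = ![1, n₁ - 1, 1, n₂ - 1] k := by
  rw [card_filter]
  simp only [Fintype.sum_sum_type]
  fin_cases k <;> simp [doubleStarKind]

theorem doubleStarKindAD_mul_diagonal (a b : ℝ) :
    doubleStarKindAD * diagonal ![1, a, 1, b] = doubleStarQuotient a b := by
  ext i j
  fin_cases i <;> fin_cases j <;> simp [doubleStarKindAD, doubleStarQuotient, mul_comm]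

theorem charpoly_doubleStarAD (n₁ n₂ : ℕ) (h₁ : 2 ≤ n₁) (h₂ : 2 ≤ n₂) :
    (doubleStarAD n₁ n₂).charpoly =
      X ^ (n₁ + n₂ - 4) *
        (X ^ 4 -
          C (9 * (n₁ : ℝ) * n₂ - 8 * n₁ - 8 * n₂ + 8) * X ^ 2 +
          C (4 * ((n₁ : ℝ) * n₂ - n₁ - n₂ + 1))) := by
  have hcard : Fintype.card (DoubleStarVerts n₁ n₂) = n₁ + n₂ := by simp; omega
  have hkinds : (fun k => (#{v : DoubleStarVerts n₁ n₂ | doubleStarKind v = k} : ℝ)) =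
      ![1, (n₁ : ℝ) - 1, 1, (n₂ : ℝ) - 1] := by
    funext k
    rw [card_doubleStarKind_eq]
    fin_cases k <;> simp [Nat.cast_sub (by omega : 1 ≤ n₁), Nat.cast_sub (by omega : 1 ≤ n₂)]
  rw [doubleStarAD_eq_submatrix, charpoly_submatrix_self _ _ (by simp; omega), hcard,
    Fintype.card_fin, hkinds, doubleStarKindAD_mul_diagonal, charpoly_doubleStarQuotient,
    show 9 * ((n₁ : ℝ) - 1) * (n₂ - 1) + (n₁ - 1) + (n₂ - 1) + 1 =
      9 * n₁ * n₂ - 8 * n₁ - 8 * n₂ + 8 by ring,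
    show 4 * ((n₁ : ℝ) - 1) * (n₂ - 1) = 4 * (n₁ * n₂ - n₁ - n₂ + 1) by ring]
end

section
/- For odd n ≥ 3, the determinant of the adjacency-diametrical matrix of the path P_n equals 2(n−1). -/
open SimpleGraph Matrix

instance (n : ℕ) : DecidableRel (pathGraph n).Adj := fun _ _ => decidable_of_iff' _ pathGraph_adj

section Multilinear

variable {R ι : Type*} [CommRing R] [Fintype ι] [DecidableEq ι]

theorem Matrix.det_updateRow_self_add_smul (A : Matrix ι ι R) (p : ι) (a : R) (u : ι → R) :
    (A.updateRow p (A p + a • u)).det = A.det + a * (A.updateRow p u).det := by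
  rw [det_updateRow_add, det_updateRow_smul, updateRow_eq_self]

theorem Matrix.det_updateRow_self_add_smul_updateRow_self_add_smul (A : Matrix ι ι R) {p q : ι}
    (hpq : p ≠ q) (a b : R) (u w : ι → R) :
    ((A.updateRow p (A p + a • u)).updateRow q (A q + b • w)).det =
      A.det + a * (A.updateRow p u).det + b * (A.updateRow q w).det +
        a * b * ((A.updateRow p u).updateRow q w).det := by
  have hq : A q = A.updateRow p (A p + a • u) q := (updateRow_ne hpq.symm).symm
  have hp : A p = A.updateRow q w p := (updateRow_ne hpq).symm
  rw [hq, det_updateRow_self_add_smul, det_updateRow_self_add_smul, updateRow_comm _ hpq, hp,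
    det_updateRow_self_add_smul, updateRow_comm _ hpq.symm]
  ring

end Multilinear

section PathGraph

variable {R : Type*} [CommRing R] {n : ℕ}

theorem pathGraph_adjMatrix_mulVec_apply (f : ℕ → R) (i : Fin n) :
    ((pathGraph n).adjMatrix R *ᵥ fun j => f j) i =
      (if i.val = 0 then 0 else f (i - 1)) + (if i.val + 1 < n then f (i + 1) else 0) := by
  simp only [mulVec, dotProduct, adjMatrix_apply, pathGraph_adj, ite_mul, one_mul, zero_mul]
  rw [Fin.sum_univ_eq_sum_range (fun j => if i.val + 1 = j ∨ j + 1 = i.val then f j else 0) n]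
  have hsplit : ∀ j ∈ Finset.range n, (if i.val + 1 = j ∨ j + 1 = i.val then f j else 0) =
      (if i.val = 0 then 0 else if i.val - 1 = j then f j else 0) +
        (if i.val + 1 = j then f j else 0) := by
    intro j _
    split_ifs <;> first | omega | simp
  have hi := i.isLt
  rw [Finset.sum_congr rfl hsplit, Finset.sum_add_distrib]
  by_cases h0 : i.val = 0
  · simp [h0]
  · simp [h0, Finset.sum_ite_eq, show i.val - 1 < n by omega]

def altSeq : ℕ → R
  | 0 => 1
  | 1 => 0
  | k + 2 => -altSeq k

theorem altSeq_add_altSeq_add_two (k : ℕ) : altSeq k + altSeq (k + 2) = (0 : R) := by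
  rw [altSeq, add_neg_cancel]

theorem altSeq_of_odd {k : ℕ} (hk : Odd k) : altSeq k = (0 : R) := by
  obtain ⟨k, rfl⟩ := hk
  induction k with
  | zero => rfl
  | succ k ih => rw [show 2 * (k + 1) + 1 = 2 * k + 1 + 2 by ring, altSeq, ih, neg_zero]

theorem pathGraph_adjMatrix_submatrix_rev :
    ((pathGraph n).adjMatrix R).submatrix Fin.rev Fin.rev = (pathGraph n).adjMatrix R := by
  ext i j
  simp only [submatrix_apply, adjMatrix_apply, pathGraph_adj, Fin.val_rev]
  have := i.isLt
  have := j.isLt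
  exact if_congr (by omega) rfl rfl

theorem det_pathGraph_adjMatrix_updateRow_zero (m : ℕ) :
    (((pathGraph (m + 1)).adjMatrix R).updateRow 0 (Pi.single (Fin.last m) 1)).det = (-1) ^ m := by
  set D := ((pathGraph (m + 1)).adjMatrix R).updateRow 0 (Pi.single (Fin.last m) 1)
  have hrow : ∀ i j, i ≠ Fin.last m →
      D (finRotate (m + 1) i) j = if i.val + 2 = j.val ∨ j.val = i.val then 1 else 0 := by
    intro i j hi
    have hrot := coe_finRotate_of_ne_last hi
    have hne : finRotate (m + 1) i ≠ 0 := fun h => by simp [h] at hrot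
    simp only [D, updateRow_ne hne, adjMatrix_apply, pathGraph_adj, hrot]
    exact if_congr (by omega) rfl rfl
  have hU : (D.submatrix (finRotate (m + 1)) id).IsUpperTriangular := by
    intro i j hji
    have hji' : j.val < i.val := hji
    by_cases hi : i = Fin.last m
    · subst hi
      simp [D, (show j ≠ Fin.last m from hji.ne)]
    · rw [submatrix_apply, id, hrow i j hi, if_neg (by omega)]
  have hdiag : ∀ i, D.submatrix (finRotate (m + 1)) id i i = 1 := by
    intro i
    by_cases hi : i = Fin.last m
    · subst hi
      simp [D]
    · rw [submatrix_apply, id, hrow i i hi, if_pos (Or.inr rfl)]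
  have h := det_permute (finRotate (m + 1)) D
  rw [det_of_isUpperTriangular hU, Finset.prod_eq_one fun i _ => hdiag i, sign_finRotate,
    Nat.add_sub_cancel] at h
  push_cast at h
  calc D.det = (-1) ^ m * ((-1) ^ m * D.det) := by rw [← mul_assoc, ← mul_pow]; norm_num
    _ = (-1) ^ m := by rw [← h, mul_one]

theorem det_pathGraph_adjMatrix_updateRow_last (m : ℕ) :
    (((pathGraph (m + 1)).adjMatrix R).updateRow (Fin.last m) (Pi.single 0 1)).det = (-1) ^ m := by
  rw [← det_pathGraph_adjMatrix_updateRow_zero, ← det_submatrix_equiv_self Fin.revPerm,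
    submatrix_updateRow_equiv]
  congr 2
  · exact pathGraph_adjMatrix_submatrix_rev
  · simp
  · ext j
    simp only [Fin.revPerm_apply, Pi.single_apply, Fin.ext_iff, Fin.val_rev, Fin.val_last,
      Fin.val_zero]
    have := j.isLt
    exact if_congr (by omega) rfl rfl

variable [IsDomain R]

theorem det_pathGraph_adjMatrix_of_odd (hn : Odd n) : ((pathGraph n).adjMatrix R).det = 0 := by
  rw [← exists_mulVec_eq_zero_iff]
  refine ⟨fun j => altSeq j, fun h => by simpa [altSeq] using congrFun h ⟨0, hn.pos⟩, ?_⟩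
  funext i
  rw [pathGraph_adjMatrix_mulVec_apply]
  rcases i with ⟨_ | k, hk⟩
  · simp [altSeq]
  · by_cases hkn : k + 2 < n
    · simp [hkn, altSeq_add_altSeq_add_two]
    · have : Odd k := by
        obtain ⟨r, rfl⟩ := hn
        exact ⟨r - 1, by omega⟩
      simp [hkn, altSeq_of_odd this]

theorem det_pathGraph_adjMatrix_updateRow_zero_updateRow_last {m : ℕ} (hm : Even m) (hm0 : m ≠ 0) :
    ((((pathGraph (m + 1)).adjMatrix R).updateRow 0 (Pi.single (Fin.last m) 1)).updateRow
      (Fin.last m) (Pi.single 0 1)).det = 0 := by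
  rw [← exists_mulVec_eq_zero_iff]
  refine ⟨fun j => altSeq (j + 1), fun h => ?_, ?_⟩
  · simpa [altSeq] using congrFun h ⟨1, by omega⟩
  have h0 : (0 : Fin (m + 1)) ≠ Fin.last m := by simp [Fin.ext_iff, hm0.symm]
  funext i
  by_cases hl : i = Fin.last m
  · subst hl
    simp [mulVec, altSeq]
  rcases i with ⟨_ | k, hk⟩
  · simp [mulVec, updateRow_ne h0, altSeq_of_odd hm.add_one]
  have hkm : k + 2 < m + 1 := by simp [Fin.ext_iff] at hl; omega
  have hz : (⟨k + 1, by omega⟩ : Fin (m + 1)) ≠ 0 := by simp [Fin.ext_iff]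
  have key := pathGraph_adjMatrix_mulVec_apply (R := R) (fun k => altSeq (k + 1)) ⟨k + 1, by omega⟩
  simp only [mulVec, updateRow_ne hl, updateRow_ne hz] at key ⊢
  rw [key]
  simp [hkm, altSeq_add_altSeq_add_two]

end PathGraph

theorem pathAD_eq_updateRow {m : ℕ} (hm : m ≠ 1) :
    pathAD (m + 1) =
      let A := (pathGraph (m + 1)).adjMatrix ℝ
      (A.updateRow 0 (A 0 + (m : ℝ) • Pi.single (Fin.last m) 1)).updateRow (Fin.last m)
        (A (Fin.last m) + (m : ℝ) • Pi.single 0 1) := by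
  ext i j
  have := i.isLt
  have := j.isLt
  simp only [pathAD, updateRow_apply, adjMatrix_apply, pathGraph_adj, Pi.add_apply, Pi.smul_apply,
    Pi.single_apply, Fin.ext_iff, Fin.val_last, Fin.val_zero, smul_eq_mul, Nat.add_sub_cancel]
  push_cast
  split_ifs <;> grind

/-- For odd `n ≥ 3`, `det(AD(Pₙ)) = 2(n−1)`. -/
theorem det_pathAD_odd (n : ℕ) (hn : 3 ≤ n) (ho : Odd n) :
    (pathAD n).det = 2 * ((n : ℝ) - 1) := by
  obtain ⟨m, rfl⟩ : ∃ m, n = m + 1 := ⟨n - 1, by omega⟩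
  have hm : Even m := by simpa [Nat.odd_add_one] using ho
  have h0 : (0 : Fin (m + 1)) ≠ Fin.last m := by simp [Fin.ext_iff]; omega
  rw [pathAD_eq_updateRow (by omega), det_updateRow_self_add_smul_updateRow_self_add_smul _ h0,
    det_pathGraph_adjMatrix_of_odd ho, det_pathGraph_adjMatrix_updateRow_zero,
    det_pathGraph_adjMatrix_updateRow_last,
    det_pathGraph_adjMatrix_updateRow_zero_updateRow_last hm (by omega), hm.neg_one_pow]
  push_cast
  ring
end

section
/- For n = 4k with k ≥ 1, the determinant of the adjacency-diametrical matrix of the path P_n equals (n−2)^2; for n = 4k+2 with k ≥ 1, it equals −n^2; and det(AD(P_2)) = −1. -/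
open Matrix

namespace Matrix

variable {m R : Type*} [Fintype m] [DecidableEq m] [CommRing R]

theorem det_fromBlocks_zero₁₁_zero₂₂ (B C : Matrix m m R) :
    (fromBlocks 0 B C 0).det = (-1) ^ Fintype.card m * B.det * C.det := by
  have hfactor : fromBlocks 0 B C 0 = fromBlocks B 0 0 1 * fromBlocks 0 1 C 0 := by
    simp [fromBlocks_multiply]
  have hshear : (fromBlocks 1 0 1 1 : Matrix (m ⊕ m) (m ⊕ m) R) * fromBlocks 0 1 C 0 =
      fromBlocks 0 1 C 1 := by
    simp [fromBlocks_multiply]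
  have hswap : (fromBlocks (0 : Matrix m m R) 1 C 0).det = (-1) ^ Fintype.card m * C.det := by
    simpa [det_fromBlocks_zero₁₂, det_fromBlocks_one₂₂, det_neg] using congrArg det hshear
  rw [hfactor, det_mul, det_fromBlocks_zero₁₂, hswap]
  simp only [det_one]
  ring

end Matrix

-- For `m = 1` the corner is the diagonal entry, which stays `1`.
def cornerBidiag {R : Type*} [Zero R] [One R] (c : R) (m : ℕ) : Matrix (Fin m) (Fin m) R := fun i j =>
  if j.val = i.val ∨ j.val + 1 = i.val then 1
  else if i.val = 0 ∧ j.val = m - 1 then c else 0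

theorem det_cornerBidiag {R : Type*} [CommRing R] (c : R) {m : ℕ} (hm : 2 ≤ m) :
    (cornerBidiag c m).det = 1 - (-1) ^ m * c := by
  obtain ⟨k, rfl⟩ : ∃ k, m = k + 1 := ⟨m - 1, by omega⟩
  have minor_zero : ((cornerBidiag c (k + 1)).submatrix Fin.succ (Fin.succAbove 0)).det = 1 := by
    rw [det_of_isLowerTriangular]
    · exact Finset.prod_eq_one fun i _ => by simp [cornerBidiag]
    · intro i j (hij : i.val < j.val)
      simp only [submatrix_apply, Fin.succAbove_zero, cornerBidiag, Fin.val_succ]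
      rw [if_neg (by omega), if_neg (by omega)]
  have minor_last :
      ((cornerBidiag c (k + 1)).submatrix Fin.succ (Fin.succAbove (Fin.last k))).det = 1 := by
    rw [det_of_isUpperTriangular]
    · exact Finset.prod_eq_one fun i _ => by simp [cornerBidiag]
    · intro i j (hij : j.val < i.val)
      simp only [submatrix_apply, Fin.succAbove_last, cornerBidiag, Fin.val_succ, Fin.val_castSucc]
      rw [if_neg (by omega), if_neg (by omega)]
  rw [det_succ_row_zero, Fintype.sum_eq_add 0 (Fin.last k)]
  · have diag : cornerBidiag c (k + 1) 0 0 = 1 := if_pos (Or.inl rfl)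
    have corner : cornerBidiag c (k + 1) 0 (Fin.last k) = c := by
      simp only [cornerBidiag, Fin.val_zero, Fin.val_last]
      rw [if_neg (by omega), if_pos ⟨trivial, by omega⟩]
    rw [diag, corner, minor_zero, minor_last, Fin.val_zero, Fin.val_last]
    ring
  · rw [Ne, Fin.ext_iff, Fin.val_zero, Fin.val_last]
    omega
  · rintro x ⟨hx0, hxl⟩
    have : cornerBidiag c (k + 1) 0 x = 0 := by
      rw [Ne, Fin.ext_iff, Fin.val_zero] at hx0
      rw [Ne, Fin.ext_iff, Fin.val_last] at hxl
      simp only [cornerBidiag, Fin.val_zero]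
      rw [if_neg (by omega), if_neg (by omega)]
    simp [this]

noncomputable def finEvenOddEquiv (m : ℕ) : Fin m ⊕ Fin m ≃ Fin (2 * m) :=
  Equiv.ofBijective (Sum.elim (fun i => ⟨2 * i, by omega⟩) (fun i => ⟨2 * i + 1, by omega⟩)) <|
    (Fintype.bijective_iff_injective_and_card _).2
      ⟨by
        rintro (i | i) (j | j) h <;>
          simp only [Sum.elim_inl, Sum.elim_inr, Fin.ext_iff, Sum.inl.injEq, Sum.inr.injEq,
            reduceCtorEq] at h ⊢ <;>
          omega,
        by simp only [Fintype.card_sum, Fintype.card_fin]; omega⟩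

@[simp]
theorem finEvenOddEquiv_inl (m : ℕ) (i : Fin m) : (finEvenOddEquiv m (.inl i) : ℕ) = 2 * i := by
  simp [finEvenOddEquiv]

@[simp]
theorem finEvenOddEquiv_inr (m : ℕ) (i : Fin m) :
    (finEvenOddEquiv m (.inr i) : ℕ) = 2 * i + 1 := by
  simp [finEvenOddEquiv]

theorem pathAD_submatrix_finEvenOddEquiv (m : ℕ) :
    (pathAD (2 * m)).submatrix (finEvenOddEquiv m) (finEvenOddEquiv m) =
      fromBlocks 0 (cornerBidiag (((2 * m : ℕ) : ℝ) - 1) m)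
        (cornerBidiag (((2 * m : ℕ) : ℝ) - 1) m)ᵀ 0 := by
  ext (i | i) (j | j) <;>
    simp only [submatrix_apply, finEvenOddEquiv_inl, finEvenOddEquiv_inr, pathAD, cornerBidiag,
      fromBlocks_apply₁₁, fromBlocks_apply₁₂, fromBlocks_apply₂₁, fromBlocks_apply₂₂,
      transpose_apply, Matrix.zero_apply]
  · rw [if_neg (by omega), if_neg (by omega)]
  · split_ifs <;> first | rfl | (exfalso; omega)
  · split_ifs <;> first | rfl | (exfalso; omega)
  · rw [if_neg (by omega), if_neg (by omega)]

theorem det_pathAD_two_mul (m : ℕ) :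
    (pathAD (2 * m)).det = (-1) ^ m * (cornerBidiag (((2 * m : ℕ) : ℝ) - 1) m).det ^ 2 := by
  rw [← det_submatrix_equiv_self (finEvenOddEquiv m), pathAD_submatrix_finEvenOddEquiv,
    det_fromBlocks_zero₁₁_zero₂₂, det_transpose, Fintype.card_fin]
  ring

/-- `det(AD(Pₙ)) = (n−2)²` if `n = 4k` with `k ≥ 1`, `det(AD(Pₙ)) = −n²` if `n = 4k+2` with
`k ≥ 1`, and `det(AD(P₂)) = −1`. -/
theorem det_pathAD_even :
    (∀ n k : ℕ, 1 ≤ k → n = 4 * k → (pathAD n).det = ((n : ℝ) - 2) ^ 2) ∧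
    (∀ n k : ℕ, 1 ≤ k → n = 4 * k + 2 → (pathAD n).det = -(n : ℝ) ^ 2) ∧
    (pathAD 2).det = -1 := by
  refine ⟨?_, ?_, ?_⟩
  · rintro n k hk rfl
    rw [show 4 * k = 2 * (2 * k) by ring, det_pathAD_two_mul, det_cornerBidiag _ (by omega),
      (even_two_mul k).neg_one_pow]
    push_cast
    ring
  · rintro n k hk rfl
    rw [show 4 * k + 2 = 2 * (2 * k + 1) by ring, det_pathAD_two_mul,
      det_cornerBidiag _ (by omega), (odd_two_mul_add_one k).neg_one_pow]
    push_cast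
    ring
  · rw [show 2 = 2 * 1 by rfl, det_pathAD_two_mul, det_unique]
    simp [cornerBidiag]
end

section
/- Let G be a connected graph with n vertices, m edges, and diameter d. Then the largest eigenvalue λ_1 of AD(G) satisfies λ_1 ≤ sqrt(((n−1)/n)·(2m + d^2·d̂(G))). -/
open Finset

/-- The adjacency-diametrical matrix of a graph `G`: entry `1` for pairs at distance `1`,
entry `d` (the diameter) for pairs at distance `d`, and `0` otherwise. -/
noncomputable def ADMatrix {V : Type*} [Fintype V] (G : SimpleGraph V) : Matrix V V ℝ :=
  fun i j =>
    if G.dist i j = 1 then 1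
    else if G.dist i j = G.diam then (G.diam : ℝ)
    else 0

/-- The diametrical degree `d̂(v)`: the number of vertices at distance `diam G` from `v`. -/
noncomputable def diamDegree {V : Type*} [Fintype V] (G : SimpleGraph V) (v : V) : ℕ :=
  (Finset.univ.filter fun u => G.dist v u = G.diam).card

/-!
The eigenvalues of `AD(G)` sum to `tr AD(G) = 0`, and their squares sum to
`tr AD(G)² ≤ 2m + d²·d̂(G)`. For reals `x₁, …, xₙ` with `∑ xᵢ = 0`, Cauchy–Schwarz applied to
the `n - 1` numbers other than `xⱼ` gives `xⱼ² ≤ (n - 1)(∑ xᵢ² - xⱼ²)`, i.e.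
`n·xⱼ² ≤ (n - 1)·∑ xᵢ²`, which bounds every eigenvalue, in particular `λ₁`.
-/

theorem Matrix.IsHermitian.trace_mul_self_eq_sum_eigenvalues_sq {𝕜 n : Type*} [RCLike 𝕜]
    [Fintype n] [DecidableEq n] {A : Matrix n n 𝕜} (hA : A.IsHermitian) :
    (A * A).trace = ∑ i, (hA.eigenvalues i : 𝕜) ^ 2 := by
  conv_lhs => rw [hA.spectral_theorem, ← map_mul, Unitary.conjStarAlgAut_apply,
    Matrix.trace_mul_cycle, Unitary.coe_star_mul_self, Matrix.one_mul,
    Matrix.diagonal_mul_diagonal, Matrix.trace_diagonal]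
  simp [sq]

theorem card_mul_sq_le_of_sum_eq_zero {ι : Type*} [Fintype ι] {x : ι → ℝ}
    (hx : ∑ i, x i = 0) (j : ι) :
    Fintype.card ι * x j ^ 2 ≤ (Fintype.card ι - 1) * ∑ i, x i ^ 2 := by
  classical
  have hrest : ∑ i ∈ univ.erase j, x i = -x j := by
    linarith [add_sum_erase univ x (mem_univ j)]
  have hrest_sq : ∑ i ∈ univ.erase j, x i ^ 2 = ∑ i, x i ^ 2 - x j ^ 2 := by
    linarith [add_sum_erase univ (x · ^ 2) (mem_univ j)]
  have hcard : ((univ.erase j).card : ℝ) = Fintype.card ι - 1 := by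
    rw [card_erase_of_mem (mem_univ j), card_univ, Nat.cast_pred (Fintype.card_pos_iff.mpr ⟨j⟩)]
  have hCS := sq_sum_le_card_mul_sum_sq (s := univ.erase j) (f := x)
  rw [hrest, hrest_sq, hcard] at hCS
  nlinarith

theorem le_sqrt_of_sum_eq_zero_of_sum_sq_le {ι : Type*} [Fintype ι] {x : ι → ℝ} {S : ℝ}
    (hx : ∑ i, x i = 0) (hS : ∑ i, x i ^ 2 ≤ S) (j : ι) :
    x j ≤ √((Fintype.card ι - 1) / Fintype.card ι * S) := by
  have hn : 1 ≤ Fintype.card ι := Fintype.card_pos_iff.mpr ⟨j⟩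
  have hn1 : (0 : ℝ) ≤ Fintype.card ι - 1 := by simpa using hn
  refine (le_abs_self _).trans (Real.abs_le_sqrt ?_)
  rw [div_mul_eq_mul_div, le_div_iff₀ (by positivity)]
  nlinarith [card_mul_sq_le_of_sum_eq_zero hx j, mul_le_mul_of_nonneg_left hS hn1]

section ADMatrix

variable {V : Type*} [Fintype V] (G : SimpleGraph V)

theorem ADMatrix_apply_self (i : V) : ADMatrix G i i = 0 := by
  rcases eq_or_ne G.diam 0 with h | h <;> simp [ADMatrix, h, Ne.symm]

theorem ADMatrix_comm (i j : V) : ADMatrix G j i = ADMatrix G i j := by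
  simp only [ADMatrix, SimpleGraph.dist_comm]

theorem trace_ADMatrix : (ADMatrix G).trace = 0 := by
  simp [Matrix.trace, ADMatrix_apply_self]

variable [DecidableRel G.Adj]

theorem ADMatrix_apply_sq_le (i j : V) :
    ADMatrix G i j ^ 2 ≤
      (if G.Adj i j then 1 else 0) + if G.dist i j = G.diam then (G.diam : ℝ) ^ 2 else 0 := by
  simp only [ADMatrix, ← SimpleGraph.dist_eq_one_iff_adj]
  split_ifs <;> nlinarith

theorem trace_ADMatrix_mul_self_le :
    (ADMatrix G * ADMatrix G).trace ≤
      2 * G.edgeFinset.card + (G.diam : ℝ) ^ 2 * ∑ v, (diamDegree G v : ℝ) := by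
  have hdeg (i : V) : ∑ j, (if G.Adj i j then (1 : ℝ) else 0) = G.degree i := by
    rw [sum_boole, ← SimpleGraph.neighborFinset_eq_filter,
      SimpleGraph.card_neighborFinset_eq_degree]
  have hdiam (i : V) : ∑ j, (if G.dist i j = G.diam then (G.diam : ℝ) ^ 2 else 0) =
      G.diam ^ 2 * diamDegree G i := by
    rw [← sum_filter, sum_const, nsmul_eq_mul, mul_comm]
    rfl
  calc (ADMatrix G * ADMatrix G).trace = ∑ i, ∑ j, ADMatrix G i j ^ 2 := by
        simp only [Matrix.trace, Matrix.diag, Matrix.mul_apply, ADMatrix_comm G, sq]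
    _ ≤ ∑ i, ∑ j, ((if G.Adj i j then 1 else 0) +
          if G.dist i j = G.diam then (G.diam : ℝ) ^ 2 else 0) := by
        gcongr with i _ j _
        exact ADMatrix_apply_sq_le G i j
    _ = 2 * G.edgeFinset.card + (G.diam : ℝ) ^ 2 * ∑ v, (diamDegree G v : ℝ) := by
        simp only [sum_add_distrib, hdeg, hdiam, ← mul_sum]
        rw [← Nat.cast_sum, SimpleGraph.sum_degrees_eq_twice_card_edges]
        push_cast
        ring

end ADMatrix

theorem spectral_radius_ADMatrix_le_general {V : Type*} [Fintype V] [DecidableEq V]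
    (G : SimpleGraph V) [DecidableRel G.Adj]
    (hA : (ADMatrix G).IsHermitian) :
    (⨆ i, hA.eigenvalues i) ≤
      Real.sqrt ((((Fintype.card V : ℝ) - 1) / (Fintype.card V : ℝ)) *
        (2 * (G.edgeFinset.card : ℝ) + (G.diam : ℝ) ^ 2 * ∑ v, (diamDegree G v : ℝ))) := by
  have hsum : ∑ i, hA.eigenvalues i = 0 := by
    simpa [trace_ADMatrix] using hA.trace_eq_sum_eigenvalues.symm
  have hsum_sq : ∑ i, hA.eigenvalues i ^ 2 ≤
      2 * G.edgeFinset.card + (G.diam : ℝ) ^ 2 * ∑ v, (diamDegree G v : ℝ) := by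
    simpa using hA.trace_mul_self_eq_sum_eigenvalues_sq ▸ trace_ADMatrix_mul_self_le G
  exact Real.iSup_le (le_sqrt_of_sum_eq_zero_of_sum_sq_le hsum hsum_sq) (Real.sqrt_nonneg _)

/-- The largest eigenvalue `λ₁` of `AD(G)` satisfies
`λ₁ ≤ √(((n−1)/n)·(2m + d²·d̂(G)))`. -/
theorem spectral_radius_ADMatrix_le {V : Type*} [Fintype V] [DecidableEq V]
    (G : SimpleGraph V) [DecidableRel G.Adj] (hG : G.Connected)
    (hA : (ADMatrix G).IsHermitian) :
    (⨆ i, hA.eigenvalues i) ≤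
      Real.sqrt ((((Fintype.card V : ℝ) - 1) / (Fintype.card V : ℝ)) *
        (2 * (G.edgeFinset.card : ℝ) + (G.diam : ℝ) ^ 2 * ∑ v, (diamDegree G v : ℝ))) :=
  spectral_radius_ADMatrix_le_general G hA
end

section
/- Let G be a connected graph with at least one edge and let λ_1 ≥ ... ≥ λ_n be the eigenvalues of AD(G). If the vertices of G can be properly colored with χ colors such that additionally no two vertices at distance equal to the diameter receive the same color, and χ_AD(G) is the minimum such number of colors, then χ_AD(G) ≥ 1 − λ_1/λ_n. -/
open Finset

/-- The graph on `V(G)` whose edges are the pairs of vertices at distance `1` or at distance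
`diam G` in `G`; its proper colorings are exactly the AD-colorings of `G`. -/
def ADGraph {V : Type*} [Fintype V] (G : SimpleGraph V) : SimpleGraph V :=
  SimpleGraph.fromRel (fun u v => G.dist u v = 1 ∨ G.dist u v = G.diam)

/-! Hoffman's argument. Let `x` be a unit eigenvector for the largest eigenvalue `λ₁` of
`AD(G)` and `w_c` its restriction to the colour class `c` of an AD-colouring with `k` colours.
The form of `AD(G)` vanishes on every colour class, so the Rayleigh bound
`λₙ ‖y‖² ≤ yᵀ AD(G) y` at `y = x - k w_c`, summed over the `k` classes, gives
`λₙ k (k - 1) ≤ -k λ₁`; divide by `λₙ ≤ 0`. -/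

open Matrix

theorem Set.indicator_dotProduct_indicator {n R : Type*} [Fintype n]
    [NonUnitalNonAssocSemiring R] (s : Set n) (x y : n → R) :
    s.indicator x ⬝ᵥ s.indicator y = s.indicator x ⬝ᵥ y := by
  classical
  refine Finset.sum_congr rfl fun v _ => ?_
  by_cases hv : v ∈ s <;> simp [hv]

theorem Matrix.indicator_dotProduct_mulVec_indicator_eq_zero {n R : Type*} [Fintype n]
    [NonUnitalNonAssocSemiring R] {A : Matrix n n R} {s : Set n}
    (hA : ∀ u ∈ s, ∀ v ∈ s, A u v = 0) (x y : n → R) :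
    s.indicator x ⬝ᵥ (A *ᵥ s.indicator y) = 0 := by
  classical
  refine Finset.sum_eq_zero fun u _ => ?_
  by_cases hu : u ∈ s
  · suffices (A *ᵥ s.indicator y) u = 0 by rw [this, mul_zero]
    refine Finset.sum_eq_zero fun v _ => ?_
    by_cases hv : v ∈ s
    · simp [hA u hu v hv]
    · simp [hv]
  · simp [hu]

theorem Finset.sum_indicator_preimage_dotProduct {n ι R : Type*} [Fintype n] [Fintype ι]
    [NonUnitalNonAssocSemiring R] (f : n → ι) (x y : n → R) :
    ∑ c, (f ⁻¹' {c}).indicator x ⬝ᵥ y = x ⬝ᵥ y := by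
  classical
  simp only [dotProduct, Set.indicator_apply, Set.mem_preimage, Set.mem_singleton_iff, ite_mul,
    zero_mul]
  rw [Finset.sum_comm]
  exact Finset.sum_congr rfl fun v _ => by rw [Finset.sum_ite_eq]; simp

-- Also covers `I = 0`, where `S / I = 0`.
theorem one_sub_div_le_of_mul_sub_one_le {S I k : ℝ} (hk : 1 ≤ k) (hIS : I ≤ S)
    (h : I * (k - 1) ≤ -S) : 1 - S / I ≤ k := by
  have hI : I ≤ 0 := by nlinarith
  rcases hI.lt_or_eq with hI | rfl
  · have : -S / I ≤ k - 1 := by rw [div_le_iff_of_neg hI]; linarith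
    rw [neg_div] at this
    linarith
  · simpa using hk

namespace Matrix.IsHermitian

section

variable {n : Type*} [Fintype n] {A : Matrix n n ℝ}

theorem dotProduct_mulVec_comm (hA : A.IsHermitian) (x y : n → ℝ) :
    x ⬝ᵥ (A *ᵥ y) = y ⬝ᵥ (A *ᵥ x) := by
  rw [dotProduct_mulVec, ← mulVec_transpose, ← conjTranspose_eq_transpose_of_trivial, hA.eq,
    dotProduct_comm]

variable [DecidableEq n]

theorem iInf_eigenvalues_mul_dotProduct_self_le (hA : A.IsHermitian) (y : n → ℝ) :
    (⨅ i, hA.eigenvalues i) * (y ⬝ᵥ y) ≤ y ⬝ᵥ (A *ᵥ y) := by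
  set U : Matrix n n ℝ := (hA.eigenvectorUnitary : Matrix n n ℝ)
  have hUt : star U = Uᵀ := conjTranspose_eq_transpose_of_trivial U
  -- in the coordinates `z = Uᵀ y` of the eigenbasis, both forms are diagonal
  set z : n → ℝ := y ᵥ* U with hz
  have hform : y ⬝ᵥ (A *ᵥ y) = ∑ i, hA.eigenvalues i * z i ^ 2 := by
    conv_lhs => rw [hA.spectral_theorem, Unitary.conjStarAlgAut_apply]
    rw [← mulVec_mulVec, ← mulVec_mulVec, dotProduct_mulVec, hUt, mulVec_transpose, ← hz]
    simp only [dotProduct, mulVec_diagonal, Function.comp_apply, RCLike.ofReal_real_eq_id,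
      id_eq]
    exact Finset.sum_congr rfl fun i _ => by ring
  have hnorm : y ⬝ᵥ y = ∑ i, z i ^ 2 := by
    have hU : U * star U = 1 := mem_unitaryGroup_iff.mp hA.eigenvectorUnitary.2
    calc y ⬝ᵥ y = z ⬝ᵥ (star U *ᵥ y) := by
          rw [dotProduct_mulVec, hz, vecMul_vecMul, hU, vecMul_one]
      _ = ∑ i, z i ^ 2 := by
          simp only [hUt, mulVec_transpose, ← hz, dotProduct, sq]
  rw [hform, hnorm, Finset.mul_sum]
  exact Finset.sum_le_sum fun i _ => mul_le_mul_of_nonneg_right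
    (ciInf_le (Set.finite_range _).bddBelow i) (sq_nonneg _)

theorem exists_mulVec_eq_iSup_eigenvalues_smul [Nonempty n] (hA : A.IsHermitian) :
    ∃ x : n → ℝ, A *ᵥ x = (⨆ i, hA.eigenvalues i) • x ∧ x ⬝ᵥ x = 1 := by
  obtain ⟨i, hi⟩ := exists_eq_ciSup_of_finite (f := hA.eigenvalues)
  refine ⟨hA.eigenvectorBasis i, by rw [hA.mulVec_eigenvectorBasis, hi], ?_⟩
  have h := orthonormal_iff_ite.mp hA.eigenvectorBasis.orthonormal i i
  rw [EuclideanSpace.inner_eq_star_dotProduct] at h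
  simpa using h

theorem iInf_eigenvalues_mul_le_of_mulVec_eq_smul (hA : A.IsHermitian) {x w : n → ℝ} {μ : ℝ}
    (hx : A *ᵥ x = μ • x) (hw : w ⬝ᵥ (A *ᵥ w) = 0) (k : ℝ) :
    (⨅ i, hA.eigenvalues i) * (x ⬝ᵥ x - 2 * k * (w ⬝ᵥ x) + k ^ 2 * (w ⬝ᵥ w)) ≤
      μ * (x ⬝ᵥ x - 2 * k * (w ⬝ᵥ x)) := by
  have hxw : x ⬝ᵥ (A *ᵥ w) = μ * (w ⬝ᵥ x) := by
    rw [hA.dotProduct_mulVec_comm, hx, dotProduct_smul, smul_eq_mul]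
  convert hA.iInf_eigenvalues_mul_dotProduct_self_le (x - k • w) using 1
  · simp only [sub_dotProduct, dotProduct_sub, smul_dotProduct, dotProduct_smul, smul_eq_mul,
      dotProduct_comm x w]
    ring
  · simp only [mulVec_sub, mulVec_smul, sub_dotProduct, dotProduct_sub, smul_dotProduct,
      dotProduct_smul, smul_eq_mul, hxw, hw, hx]
    ring

theorem one_sub_iSup_div_iInf_eigenvalues_le_card [Nonempty n] {ι : Type*} [Fintype ι]
    (hA : A.IsHermitian) (f : n → ι) (hf : ∀ u v, f u = f v → A u v = 0) :
    1 - (⨆ i, hA.eigenvalues i) / (⨅ i, hA.eigenvalues i) ≤ Fintype.card ι := by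
  set S := ⨆ i, hA.eigenvalues i
  set I := ⨅ i, hA.eigenvalues i
  set k : ℝ := (Fintype.card ι : ℝ)
  obtain ⟨x, hx, hx1⟩ := hA.exists_mulVec_eq_iSup_eigenvalues_smul
  set w : ι → n → ℝ := fun c => (f ⁻¹' {c}).indicator x
  have hw : ∀ c, w c ⬝ᵥ (A *ᵥ w c) = 0 := fun c =>
    indicator_dotProduct_mulVec_indicator_eq_zero
      (fun u hu v hv => hf u v (hu.trans (Set.mem_singleton_iff.mp hv).symm)) x x
  have hww : ∀ c, w c ⬝ᵥ w c = w c ⬝ᵥ x := fun c => Set.indicator_dotProduct_indicator _ x x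
  have hsum : ∀ a b : ℝ, ∑ c, (a + b * (w c ⬝ᵥ x)) = k * a + b := fun a b => by
    rw [Finset.sum_add_distrib, ← Finset.mul_sum, Finset.sum_indicator_preimage_dotProduct, hx1]
    simp [k]
  have hclass : ∀ c, I + I * (k ^ 2 - 2 * k) * (w c ⬝ᵥ x) ≤ S + -2 * k * S * (w c ⬝ᵥ x) :=
    fun c => by
      have := hA.iInf_eigenvalues_mul_le_of_mulVec_eq_smul hx (hw c) k
      rw [hww, hx1] at this
      linarith
  have htotal := Finset.sum_le_sum fun c (_ : c ∈ Finset.univ) => hclass c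
  rw [hsum, hsum] at htotal
  have hk : 1 ≤ k := by
    have : Nonempty ι := ⟨f (Classical.arbitrary n)⟩
    exact Nat.one_le_cast.mpr Fintype.card_pos
  refine one_sub_div_le_of_mul_sub_one_le hk
    (ciInf_le_ciSup (Set.finite_range _).bddBelow (Set.finite_range _).bddAbove)
    (le_of_mul_le_mul_left (by linarith) (by linarith : (0 : ℝ) < k))

end

end Matrix.IsHermitian

theorem ADMatrix_eq_zero_of_coloring {V : Type*} [Fintype V] (G : SimpleGraph V) {α : Type*}
    (C : (ADGraph G).Coloring α) {u v : V} (h : C u = C v) : ADMatrix G u v = 0 := by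
  rcases eq_or_ne u v with rfl | hne
  · by_cases hd : G.diam = 0
    · simp [ADMatrix, hd]
    · simp [ADMatrix, Ne.symm hd]
  · have hnadj : ¬ (ADGraph G).Adj u v := fun hadj => C.valid hadj h
    simp only [ADGraph, SimpleGraph.fromRel_adj, ne_eq, hne, not_false_eq_true, true_and,
      not_or] at hnadj
    simp [ADMatrix, hnadj.1.1, hnadj.1.2]

theorem ADChromaticNumber_ge_general {V : Type*} [Fintype V] [DecidableEq V] [Nonempty V]
    (G : SimpleGraph V)
    (hA : (ADMatrix G).IsHermitian) (χ : ℕ)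
    (hχ : (ADGraph G).chromaticNumber = χ) :
    1 - (⨆ i, hA.eigenvalues i) / (⨅ i, hA.eigenvalues i) ≤ (χ : ℝ) := by
  obtain ⟨C⟩ : (ADGraph G).Colorable χ := SimpleGraph.chromaticNumber_le_iff_colorable.mp hχ.le
  simpa using hA.one_sub_iSup_div_iInf_eigenvalues_le_card C
    fun _ _ => ADMatrix_eq_zero_of_coloring G C

/-- Hoffman-type bound for the AD-chromatic number: `χ_AD(G) ≥ 1 − λ₁/λₙ`. -/
theorem ADChromaticNumber_ge {V : Type*} [Fintype V] [DecidableEq V] [Nonempty V]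
    (G : SimpleGraph V) (hG : G.Connected) (hE : G.edgeSet.Nonempty)
    (hA : (ADMatrix G).IsHermitian) (χ : ℕ)
    (hχ : (ADGraph G).chromaticNumber = χ) :
    1 - (⨆ i, hA.eigenvalues i) / (⨅ i, hA.eigenvalues i) ≤ (χ : ℝ) :=
  ADChromaticNumber_ge_general G hA χ hχ
end

section
/- Let G be a connected graph on n vertices, and let n^+ and n^− denote the number of positive and negative eigenvalues of AD(G), respectively. If S is a set of vertices of G such that no two vertices of S are adjacent and no two vertices of S are at distance equal to the diameter d, then |S| ≤ min{n − n^+, n − n^−}. -/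
/-!
The quadratic form `x ↦ re ⟪x, A x⟫` of a Hermitian matrix `A` vanishes on the vectors supported
on `S` whenever `A` vanishes on `S × S`, and it is positive (negative) definite on the span of the
eigenvectors with positive (negative) eigenvalues. A subspace on which the form vanishes meets one
on which it is definite only in `0`, so `|S| + n⁺ ≤ n` and `|S| + n⁻ ≤ n`.
-/

open Finset

open Module Submodule RCLike
open scoped InnerProductSpace

theorem Submodule.finrank_add_finrank_le_of_isotropic_of_anisotropic {K E F : Type*}
    [DivisionRing K] [AddCommGroup E] [Module K E] [FiniteDimensional K E] [Zero F]
    {W U : Submodule K E}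
    (q : E → F) (hW : ∀ x ∈ W, q x = 0 → x = 0) (hU : ∀ x ∈ U, q x = 0) :
    finrank K W + finrank K U ≤ finrank K E :=
  finrank_add_finrank_le_of_disjoint <| disjoint_def.mpr fun x hxW hxU ↦ hW x hxW (hU x hxU)

namespace OrthonormalBasis

variable {ι 𝕜 E : Type*} [RCLike 𝕜] [NormedAddCommGroup E] [InnerProductSpace 𝕜 E] [Fintype ι]
  (b : OrthonormalBasis ι 𝕜 E)

theorem finrank_span_image (s : Finset ι) : finrank 𝕜 (span 𝕜 (b '' s)) = s.card := by
  have hli : LinearIndependent 𝕜 fun i : (s : Set ι) ↦ b i :=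
    b.orthonormal.linearIndependent.comp _ Subtype.val_injective
  rw [Set.image_eq_range, finrank_span_eq_card hli]
  simp

theorem repr_apply_eq_zero_of_mem_span_image {s : Set ι} {x : E} (hx : x ∈ span 𝕜 (b '' s))
    {i : ι} (hi : i ∉ s) : b.repr x i = 0 := by
  rw [← b.coe_toBasis, Module.Basis.mem_span_image] at hx
  rw [← b.coe_toBasis_repr_apply]
  exact Finsupp.notMem_support_iff.mp fun h ↦ hi (hx h)

theorem exists_mem_repr_apply_ne_zero_of_mem_span_image {s : Set ι} {x : E}
    (hx : x ∈ span 𝕜 (b '' s)) (hx0 : x ≠ 0) : ∃ i ∈ s, b.repr x i ≠ 0 := by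
  obtain ⟨i, hi⟩ : ∃ i, b.repr x i ≠ 0 := by
    by_contra! h
    exact hx0 (b.repr.map_eq_zero_iff.mp (PiLp.ext h))
  exact ⟨i, by_contra fun his ↦ hi (b.repr_apply_eq_zero_of_mem_span_image hx his), hi⟩

end OrthonormalBasis

namespace Matrix

variable {𝕜 n : Type*} [RCLike 𝕜] [Fintype n] [DecidableEq n] {A : Matrix n n 𝕜}

theorem inner_toEuclideanLin_self_eq_zero_of_mem_span {S : Set n}
    (hS : ∀ u ∈ S, ∀ v ∈ S, A u v = 0) {x : EuclideanSpace 𝕜 n}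
    (hx : x ∈ span 𝕜 (EuclideanSpace.basisFun n 𝕜 '' S)) : ⟪x, A.toEuclideanLin x⟫_𝕜 = 0 := by
  have hsupp : ∀ i ∉ S, x i = 0 := fun i hi ↦ by
    simpa using (EuclideanSpace.basisFun n 𝕜).repr_apply_eq_zero_of_mem_span_image hx hi
  rw [EuclideanSpace.inner_eq_star_dotProduct, Matrix.toLpLin_apply]
  refine Finset.sum_eq_zero fun i _ ↦ ?_
  by_cases hi : i ∈ S
  · have : (A *ᵥ x.ofLp) i = 0 := Finset.sum_eq_zero fun j _ ↦ by
      by_cases hj : j ∈ S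
      · simp [hS i hi j hj]
      · simp [hsupp j hj]
    simp [this]
  · simp [hsupp i hi]

namespace IsHermitian

variable (hA : A.IsHermitian)

theorem eigenvectorBasis_repr_toEuclideanLin (x : EuclideanSpace 𝕜 n) (j : n) :
    hA.eigenvectorBasis.repr (A.toEuclideanLin x) j =
      hA.eigenvalues j * hA.eigenvectorBasis.repr x j := by
  have hb : A.toEuclideanLin (hA.eigenvectorBasis j) =
      hA.eigenvalues j • hA.eigenvectorBasis j := by
    ext i
    simpa [toLpLin_apply] using congrFun (hA.mulVec_eigenvectorBasis j) i
  rw [OrthonormalBasis.repr_apply_apply, OrthonormalBasis.repr_apply_apply,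
    ← isSymmetric_toEuclideanLin_iff.mpr hA, hb, real_smul_eq_coe_smul (K := 𝕜), inner_smul_left,
    conj_ofReal]

theorem re_inner_toEuclideanLin_self (x : EuclideanSpace 𝕜 n) :
    re ⟪x, A.toEuclideanLin x⟫_𝕜 =
      ∑ j, hA.eigenvalues j * ‖hA.eigenvectorBasis.repr x j‖ ^ 2 := by
  rw [← hA.eigenvectorBasis.repr.inner_map_map, PiLp.inner_apply, map_sum]
  refine Finset.sum_congr rfl fun j _ ↦ ?_
  rw [eigenvectorBasis_repr_toEuclideanLin, inner_apply, mul_assoc, mul_conj, ← ofReal_pow,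
    ← ofReal_mul, ofReal_re]

theorem re_inner_toEuclideanLin_self_pos {s : Set n} (hs : ∀ j ∈ s, 0 < hA.eigenvalues j)
    {x : EuclideanSpace 𝕜 n} (hx : x ∈ span 𝕜 (hA.eigenvectorBasis '' s)) (hx0 : x ≠ 0) :
    0 < re ⟪x, A.toEuclideanLin x⟫_𝕜 := by
  obtain ⟨j, hjs, hj⟩ := hA.eigenvectorBasis.exists_mem_repr_apply_ne_zero_of_mem_span_image hx hx0
  rw [hA.re_inner_toEuclideanLin_self]
  refine Finset.sum_pos' (fun i _ ↦ ?_) ⟨j, mem_univ j, by have := hs j hjs; positivity⟩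
  by_cases hi : i ∈ s
  · have := hs i hi; positivity
  · simp [hA.eigenvectorBasis.repr_apply_eq_zero_of_mem_span_image hx hi]

theorem re_inner_toEuclideanLin_self_neg {s : Set n} (hs : ∀ j ∈ s, hA.eigenvalues j < 0)
    {x : EuclideanSpace 𝕜 n} (hx : x ∈ span 𝕜 (hA.eigenvectorBasis '' s)) (hx0 : x ≠ 0) :
    re ⟪x, A.toEuclideanLin x⟫_𝕜 < 0 := by
  obtain ⟨j, hjs, hj⟩ := hA.eigenvectorBasis.exists_mem_repr_apply_ne_zero_of_mem_span_image hx hx0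
  rw [hA.re_inner_toEuclideanLin_self]
  refine Finset.sum_neg' (fun i _ ↦ ?_) ⟨j, mem_univ j, ?_⟩
  · by_cases hi : i ∈ s
    · exact mul_nonpos_of_nonpos_of_nonneg (hs i hi).le (by positivity)
    · simp [hA.eigenvectorBasis.repr_apply_eq_zero_of_mem_span_image hx hi]
  · exact mul_neg_of_neg_of_pos (hs j hjs) (by positivity)

theorem card_add_card_le_of_re_inner_ne_zero {P S : Finset n}
    (hP : ∀ x ∈ span 𝕜 (hA.eigenvectorBasis '' P), x ≠ 0 → re ⟪x, A.toEuclideanLin x⟫_𝕜 ≠ 0)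
    (hS : ∀ u ∈ S, ∀ v ∈ S, A u v = 0) :
    #P + #S ≤ Fintype.card n := by
  have := finrank_add_finrank_le_of_isotropic_of_anisotropic
    (W := span 𝕜 (hA.eigenvectorBasis '' P)) (U := span 𝕜 (EuclideanSpace.basisFun n 𝕜 '' S))
    (fun x ↦ re ⟪x, A.toEuclideanLin x⟫_𝕜) (fun x hx hq ↦ by_contra fun hx0 ↦ hP x hx hx0 hq)
    (fun x hx ↦ by simp [inner_toEuclideanLin_self_eq_zero_of_mem_span hS hx])
  rwa [OrthonormalBasis.finrank_span_image, OrthonormalBasis.finrank_span_image,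
    finrank_euclideanSpace] at this

theorem card_le_card_sub_card_filter_pos {S : Finset n} (hS : ∀ u ∈ S, ∀ v ∈ S, A u v = 0) :
    #S ≤ Fintype.card n - #{i | 0 < hA.eigenvalues i} := by
  have := hA.card_add_card_le_of_re_inner_ne_zero (P := {i | 0 < hA.eigenvalues i})
    (fun x hx hx0 ↦ (hA.re_inner_toEuclideanLin_self_pos (by simp) hx hx0).ne') hS
  omega

theorem card_le_card_sub_card_filter_neg {S : Finset n} (hS : ∀ u ∈ S, ∀ v ∈ S, A u v = 0) :
    #S ≤ Fintype.card n - #{i | hA.eigenvalues i < 0} := by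
  have := hA.card_add_card_le_of_re_inner_ne_zero (P := {i | hA.eigenvalues i < 0})
    (fun x hx hx0 ↦ (hA.re_inner_toEuclideanLin_self_neg (by simp) hx hx0).ne) hS
  omega

end IsHermitian
end Matrix

theorem ADMatrix_apply_eq_zero {V : Type*} [Fintype V] {G : SimpleGraph V} {u v : V}
    (h : u ≠ v → ¬G.Adj u v ∧ G.dist u v ≠ G.diam) : ADMatrix G u v = 0 := by
  obtain rfl | huv := eq_or_ne u v
  · simp only [ADMatrix, SimpleGraph.dist_self, zero_ne_one, if_false]
    split_ifs with h0
    · simp [← h0]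
    · rfl
  · have h1 : G.dist u v ≠ 1 := fun h1 ↦ (h huv).1 (SimpleGraph.dist_eq_one_iff_adj.mp h1)
    simp [ADMatrix, h1, (h huv).2]

theorem ADIndependent_card_le_general {V : Type*} [Fintype V] [DecidableEq V]
    (G : SimpleGraph V)
    (hA : (ADMatrix G).IsHermitian)
    (S : Finset V)
    (hS : ∀ u ∈ S, ∀ v ∈ S, u ≠ v → ¬G.Adj u v ∧ G.dist u v ≠ G.diam) :
    S.card ≤
      min (Fintype.card V - (Finset.univ.filter fun i => 0 < hA.eigenvalues i).card)
          (Fintype.card V - (Finset.univ.filter fun i => hA.eigenvalues i < 0).card) := by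
  have hS0 : ∀ u ∈ S, ∀ v ∈ S, ADMatrix G u v = 0 :=
    fun u hu v hv ↦ ADMatrix_apply_eq_zero (hS u hu v hv)
  exact le_min (hA.card_le_card_sub_card_filter_pos hS0) (hA.card_le_card_sub_card_filter_neg hS0)

/-- If `S` is a set of vertices no two of which are adjacent and no two of which are at
distance equal to the diameter, then `|S| ≤ min{n − n⁺, n − n⁻}`, where `n⁺` and `n⁻` are the
numbers of positive and negative eigenvalues of `AD(G)`. -/
theorem ADIndependent_card_le {V : Type*} [Fintype V] [DecidableEq V]
    (G : SimpleGraph V) (hG : G.Connected)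
    (hA : (ADMatrix G).IsHermitian)
    (S : Finset V)
    (hS : ∀ u ∈ S, ∀ v ∈ S, u ≠ v → ¬G.Adj u v ∧ G.dist u v ≠ G.diam) :
    S.card ≤
      min (Fintype.card V - (Finset.univ.filter fun i => 0 < hA.eigenvalues i).card)
          (Fintype.card V - (Finset.univ.filter fun i => hA.eigenvalues i < 0).card) :=
  ADIndependent_card_le_general G hA S hS
end

section
/- Let G be a connected graph on n vertices with AD matrix AD(G), and let H be an r-regular graph on m vertices. Suppose the lexicographic product G[H] has diameter greater than 2, every vertex of G has a vertex at distance ≥ 2 in G (so that copies of H contribute only adjacency entries), and X is an eigenvector of A(H) with eigenvalue μ ≠ r orthogonal to the all-ones vector. Then for any vector Y ∈ R^n, the vector Y ⊗ X is an eigenvector of AD(G[H]) with eigenvalue μ; hence each such eigenvalue μ of A(H) occurs with multiplicity at least n in the spectrum of AD(G[H]). -/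
open Finset SimpleGraph

/-- The lexicographic product `G[H]`: `(u₁, v₁) ~ (u₂, v₂)` iff `u₁ ~ u₂` in `G`, or
`u₁ = u₂` and `v₁ ~ v₂` in `H`. -/
def lexProd {V W : Type*} (G : SimpleGraph V) (H : SimpleGraph W) : SimpleGraph (V × W) where
  Adj a b := G.Adj a.1 b.1 ∨ (a.1 = b.1 ∧ H.Adj a.2 b.2)
  symm := by
    constructor
    rintro a b (h | ⟨h₁, h₂⟩)
    · exact Or.inl h.symm
    · exact Or.inr ⟨h₁.symm, h₂.symm⟩
  loopless := by
    constructor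
    rintro a (h | ⟨_, h⟩)
    · exact G.irrefl h
    · exact H.irrefl h

/-!
Since `X ⟂ 𝟙`, the off-diagonal blocks of `AD(G[H])` kill `Y ⊗ X` as soon as they are constant
along rows, and they are: for `u ≠ v` the distance from `(u, a)` to `(v, b)` in `G[H]` is
`G.dist u v`. A diagonal block is `A(H)`: two vertices `(u, a), (u, b)` are at distance at most
`2` through `(x, b)` for a neighbour `x` of `u`, and `2` is below the diameter, so only adjacency
entries survive. Hence `AD(G[H]) (Y ⊗ X) = Y ⊗ A(H) X = μ (Y ⊗ X)`.
-/

theorem Matrix.mulVec_tmul_of_offDiagBlocks_const {V W R : Type*} [Fintype V] [Fintype W]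
    [CommSemiring R] (M : Matrix (V × W) (V × W) R) (A : Matrix W W R)
    (hdiag : ∀ u a b, M (u, a) (u, b) = A a b)
    (hoff : ∀ u v a b, u ≠ v → M (u, a) (v, b) = M (u, a) (v, a))
    (X : W → R) (hX : ∑ w, X w = 0) (Y : V → R) :
    M.mulVec (fun p => Y p.1 * X p.2) = fun p => Y p.1 * (A.mulVec X) p.2 := by
  funext ⟨u, a⟩
  simp only [Matrix.mulVec, dotProduct, Fintype.sum_prod_type]
  rw [Finset.sum_eq_single u]
  · simp only [hdiag, Finset.mul_sum]
    exact Finset.sum_congr rfl fun b _ => by ring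
  · intro v _ hvu
    calc ∑ b, M (u, a) (v, b) * (Y v * X b) = M (u, a) (v, a) * Y v * ∑ b, X b := by
          rw [Finset.mul_sum]
          exact Finset.sum_congr rfl fun b _ => by rw [hoff u v a b hvu.symm]; ring
      _ = 0 := by rw [hX, mul_zero]
  · exact fun hu => absurd (Finset.mem_univ u) hu

theorem ADMatrix_apply_of_dist_lt_diam {V : Type*} [Fintype V] {K : SimpleGraph V}
    [DecidableRel K.Adj] {p q : V} (h : K.dist p q < K.diam) :
    ADMatrix K p q = K.adjMatrix ℝ p q := by
  by_cases hadj : K.Adj p q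
  · simp [ADMatrix, dist_eq_one_iff_adj.mpr hadj, hadj]
  · simp [ADMatrix, hadj, h.ne]

theorem SimpleGraph.exists_adj_of_dist_ne_zero {V : Type*} {G : SimpleGraph V} {u v : V}
    (h : G.dist u v ≠ 0) : ∃ x, G.Adj u x := by
  obtain ⟨p, -⟩ := exists_walk_of_dist_ne_zero h
  exact ⟨p.snd, p.adj_snd (Walk.not_nil_of_ne (dist_ne_zero_iff_ne_and_reachable.mp h).1)⟩

section LexProd

variable {V W : Type*} {G : SimpleGraph V} {H : SimpleGraph W}

@[simp]
theorem lexProd_adj {p q : V × W} :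
    (lexProd G H).Adj p q ↔ G.Adj p.1 q.1 ∨ (p.1 = q.1 ∧ H.Adj p.2 q.2) :=
  Iff.rfl

variable (G H) in
def lexProdLeft (b : W) : G →g lexProd G H where
  toFun v := (v, b)
  map_rel' h := Or.inl h

theorem exists_lexProd_walk_length_eq {u v : V} (p : G.Walk u v) (huv : u ≠ v) (a b : W) :
    ∃ w : (lexProd G H).Walk (u, a) (v, b), w.length = p.length := by
  cases p with
  | nil => exact absurd rfl huv
  | @cons _ x _ h q =>
    have hstep : (lexProd G H).Adj (u, a) (x, b) := Or.inl h
    refine ⟨.cons hstep (q.map (lexProdLeft G H b)), ?_⟩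
    exact congrArg Nat.succ (Walk.length_map _ q)

theorem exists_walk_fst_length_le {p q : V × W} (w : (lexProd G H).Walk p q) :
    ∃ w' : G.Walk p.1 q.1, w'.length ≤ w.length := by
  induction w with
  | nil => exact ⟨.nil, le_rfl⟩
  | cons h _ ih =>
    obtain ⟨w', hw'⟩ := ih
    rw [Walk.length_cons]
    rcases h with h | ⟨h, -⟩
    · exact ⟨.cons h w', by rw [Walk.length_cons]; omega⟩
    · exact ⟨w'.copy h.symm rfl, by rw [Walk.length_copy]; omega⟩

theorem lexProd_dist_of_fst_ne {u v : V} (huv : u ≠ v) (a b : W) :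
    (lexProd G H).dist (u, a) (v, b) = G.dist u v := by
  by_cases hr : G.Reachable u v
  · obtain ⟨p, hp⟩ := hr.exists_walk_length_eq_dist
    obtain ⟨w, hw⟩ := exists_lexProd_walk_length_eq (H := H) p huv a b
    obtain ⟨w₀, hw₀⟩ := Reachable.exists_walk_length_eq_dist ⟨w⟩
    obtain ⟨p₀, hp₀⟩ := exists_walk_fst_length_le w₀
    exact le_antisymm ((dist_le w).trans_eq (hw.trans hp)) ((dist_le p₀).trans (hp₀.trans_eq hw₀))
  · have hr' : ¬ (lexProd G H).Reachable (u, a) (v, b) :=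
      fun ⟨w⟩ => hr ⟨(exists_walk_fst_length_le w).choose⟩
    rw [dist_eq_zero_of_not_reachable hr, dist_eq_zero_of_not_reachable hr']

theorem lexProd_dist_le_two_of_adj {u x : V} (hux : G.Adj u x) (a b : W) :
    (lexProd G H).dist (u, a) (u, b) ≤ 2 := by
  have hout : (lexProd G H).Adj (u, a) (x, b) := Or.inl hux
  have hback : (lexProd G H).Adj (x, b) (u, b) := Or.inl hux.symm
  exact dist_le (.cons hout hback.toWalk)

variable [Fintype V] [Fintype W]

theorem ADMatrix_lexProd_apply_of_fst_ne {u v : V} (huv : u ≠ v) (a b : W) :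
    ADMatrix (lexProd G H) (u, a) (v, b) = ADMatrix (lexProd G H) (u, a) (v, a) := by
  simp only [ADMatrix, lexProd_dist_of_fst_ne huv]

theorem ADMatrix_lexProd_apply_fst_eq [DecidableRel H.Adj] {u x : V} (hux : G.Adj u x)
    (hdiam : 2 < (lexProd G H).diam) (a b : W) :
    ADMatrix (lexProd G H) (u, a) (u, b) = H.adjMatrix ℝ a b := by
  classical
  rw [ADMatrix_apply_of_dist_lt_diam ((lexProd_dist_le_two_of_adj hux a b).trans_lt hdiam)]
  simp [adjMatrix_apply]

end LexProd

theorem ADMatrix_lexProd_eigenvector_general {V W : Type*} [Fintype V] [Fintype W]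
    (G : SimpleGraph V) (H : SimpleGraph W) [DecidableRel H.Adj]
    (hdiam : 2 < (lexProd G H).diam)
    (hfar : ∀ u : V, ∃ v : V, 2 ≤ G.dist u v)
    (X : W → ℝ) (mu : ℝ)
    (hX : (H.adjMatrix ℝ).mulVec X = mu • X)
    (horth : ∑ w, X w = 0) :
    ∀ Y : V → ℝ,
      (ADMatrix (lexProd G H)).mulVec (fun p => Y p.1 * X p.2) =
        mu • (fun p => Y p.1 * X p.2) := by
  intro Y
  have hdiag (u : V) (a b : W) : ADMatrix (lexProd G H) (u, a) (u, b) = H.adjMatrix ℝ a b := by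
    obtain ⟨v, huv⟩ := hfar u
    obtain ⟨x, hux⟩ := exists_adj_of_dist_ne_zero (by omega : G.dist u v ≠ 0)
    exact ADMatrix_lexProd_apply_fst_eq hux hdiam a b
  rw [Matrix.mulVec_tmul_of_offDiagBlocks_const _ _ hdiag
    (fun _ _ _ _ huv => ADMatrix_lexProd_apply_of_fst_ne huv _ _) X horth Y, hX]
  funext p
  simp only [Pi.smul_apply, smul_eq_mul]
  ring

/-- For the lexicographic product `G[H]` of diameter `> 2`, with `H` an `r`-regular graph and
every vertex of `G` having some vertex at distance `≥ 2`, every eigenvector `X` of `A(H)` with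
eigenvalue `μ ≠ r` orthogonal to the all-ones vector gives, for each `Y : V → ℝ`, an
eigenvector `Y ⊗ X` of `AD(G[H])` with eigenvalue `μ`. -/
theorem ADMatrix_lexProd_eigenvector {V W : Type*} [Fintype V] [Fintype W]
    (G : SimpleGraph V) (H : SimpleGraph W) [DecidableRel H.Adj]
    (hG : G.Connected) (r : ℕ) (hreg : ∀ w, H.degree w = r)
    (hdiam : 2 < (lexProd G H).diam)
    (hfar : ∀ u : V, ∃ v : V, 2 ≤ G.dist u v)
    (X : W → ℝ) (mu : ℝ) (hmu : mu ≠ (r : ℝ))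
    (hX : (H.adjMatrix ℝ).mulVec X = mu • X)
    (horth : ∑ w, X w = 0) :
    ∀ Y : V → ℝ,
      (ADMatrix (lexProd G H)).mulVec (fun p => Y p.1 * X p.2) =
        mu • (fun p => Y p.1 * X p.2) :=
  ADMatrix_lexProd_eigenvector_general G H hdiam hfar X mu hX horth
end
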